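/- arXiv:2408.04982 — 5 statements merged into one kernel-verified Lean document; each statement's English description precedes it below -/
import Mathlib

section
/- Let U be the Lucas sequence with integer parameters A, B satisfying A ≥ 1 and A² > 4B > 0. Let α = (A + √(A²−4B))/2. Then for every n ≥ 2 one has U_n ≥ α^{n−1}. -/
/-!
With β = (A − √(A² − 4B))/2 the conjugate root, the recurrence factors as
U (n+2) − α U (n+1) = β (U (n+1) − α U n), so U (n+1) − α U n = βⁿ. Since A > 0 and B > 0 both
roots are nonnegative, hence U (n+1) ≥ α U n, and induction from U 1 = 1 gives U (n+1) ≥ αⁿ.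
-/

section LinearRecurrence

variable {R : Type*} {U : ℕ → R} {α β : R}

theorem succ_sub_mul_eq_pow_mul_of_rec [CommRing R]
    (hrec : ∀ n, U (n + 2) = (α + β) * U (n + 1) - α * β * U n) (n : ℕ) :
    U (n + 1) - α * U n = β ^ n * (U 1 - α * U 0) := by
  induction n with
  | zero => simp
  | succ n ih => rw [hrec, pow_succ']; linear_combination β * ih

theorem pow_le_succ_of_rec [CommRing R] [PartialOrder R] [IsOrderedRing R]
    (hU0 : U 0 = 0) (hU1 : U 1 = 1)
    (hrec : ∀ n, U (n + 2) = (α + β) * U (n + 1) - α * β * U n)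
    (hα : 0 ≤ α) (hβ : 0 ≤ β) (n : ℕ) : α ^ n ≤ U (n + 1) := by
  have step (k : ℕ) : α * U k ≤ U (k + 1) := by
    have h := succ_sub_mul_eq_pow_mul_of_rec hrec k
    rw [hU0, hU1, mul_zero, sub_zero, mul_one] at h
    exact sub_nonneg.mp (h ▸ pow_nonneg hβ k)
  induction n with
  | zero => simp [hU1]
  | succ n ih => exact pow_succ' α n ▸ (mul_le_mul_of_nonneg_left ih hα).trans (step _)

end LinearRecurrence

theorem lucas_real_Bpos_growth (A B : ℤ) (U : ℕ → ℤ)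
    (hU0 : U 0 = 0) (hU1 : U 1 = 1)
    (hrec : ∀ n : ℕ, U (n + 2) = A * U (n + 1) - B * U n)
    (hA : 1 ≤ A) (hD : 4 * B < A ^ 2) (hB : 0 < B) :
    ∀ n : ℕ, 2 ≤ n →
      (((A : ℝ) + Real.sqrt ((A : ℝ) ^ 2 - 4 * B)) / 2) ^ (n - 1) ≤ (U n : ℝ) := by
  intro n hn
  obtain ⟨m, rfl⟩ : ∃ m, n = m + 1 := ⟨n - 1, by omega⟩
  have hA' : (0 : ℝ) ≤ A := by exact_mod_cast (zero_le_one.trans hA)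
  have hB' : (0 : ℝ) ≤ B := by exact_mod_cast hB.le
  have hD' : (4 : ℝ) * B ≤ (A : ℝ) ^ 2 := by exact_mod_cast hD.le
  set s := Real.sqrt ((A : ℝ) ^ 2 - 4 * B)
  have hs_sq : s ^ 2 = (A : ℝ) ^ 2 - 4 * B := Real.sq_sqrt (by linarith)
  have hs_le : s ≤ A := (Real.sqrt_le_left hA').mpr (by linarith)
  have hsum : (A + s) / 2 + (A - s) / 2 = (A : ℝ) := by ring
  have hprod : (A + s) / 2 * ((A - s) / 2) = (B : ℝ) := by linear_combination -hs_sq / 4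
  have hrec' (k : ℕ) : (U (k + 2) : ℝ)
      = ((A + s) / 2 + (A - s) / 2) * U (k + 1) - (A + s) / 2 * ((A - s) / 2) * U k := by
    rw [hsum, hprod]
    exact_mod_cast hrec k
  simpa using pow_le_succ_of_rec (U := fun k => (U k : ℝ)) (by simp [hU0]) (by simp [hU1]) hrec'
    (by positivity) (by linarith) m
end

section
/- Let A, B be integers with A·B·(A²−4B) ≠ 0 and let α, β be the roots of x² − Ax + B. Then α/β is a root of unity if and only if (A,B) is of the form (r, r²), (2r, 2r²), or (3r, 3r²) for some nonzero integer r. -/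
/-!
Write `ζ = α / β`. By Vieta, `ζ + ζ⁻¹ = A² / B - 2`. If `ζ` is a root of unity, then
`ζ + ζ⁻¹` is an algebraic integer of absolute value at most `2`; being rational, it is an
integer in `[-2, 2]`, so `A² = k B` with `0 ≤ k ≤ 4`. Here `k = 0` would force `A = 0` and
`k = 4` a vanishing discriminant, while for `k ∈ {1, 2, 3}` squarefreeness of `k` gives
`A = k r`, `B = k r²`. Conversely, for `k ∈ {1, 2, 3}` the number `ζ` is a root of
`X² - (k - 2) X + 1`, a divisor of `X¹² - 1`.
-/

lemma Rat.exists_int_eq_of_isIntegral {K : Type*} [Field K] [CharZero K] {q : ℚ}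
    (h : IsIntegral ℤ (q : K)) : ∃ n : ℤ, (n : ℚ) = q := by
  rw [← eq_ratCast (algebraMap ℚ K), isIntegral_algebraMap_iff (algebraMap ℚ K).injective] at h
  exact IsIntegrallyClosed.isIntegral_iff.mp h

lemma isIntegral_of_pow_eq_one {R S : Type*} [CommRing R] [Ring S] [Algebra R S] {x : S} {m : ℕ}
    (hm : m ≠ 0) (hx : x ^ m = 1) : IsIntegral R x :=
  .of_pow (Nat.pos_of_ne_zero hm) (hx ▸ isIntegral_one)

lemma Complex.exists_int_eq_add_inv_of_pow_eq_one {ζ : ℂ} {m : ℕ} (hm : m ≠ 0)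
    (hζ : ζ ^ m = 1) {q : ℚ} (hq : ζ + ζ⁻¹ = q) : ∃ n : ℤ, (n : ℚ) = q ∧ |n| ≤ 2 := by
  have hint : IsIntegral ℤ (ζ + ζ⁻¹) :=
    (isIntegral_of_pow_eq_one hm hζ).add
      (isIntegral_of_pow_eq_one hm (by rw [inv_pow, hζ, inv_one]))
  obtain ⟨n, rfl⟩ := Rat.exists_int_eq_of_isIntegral (hq ▸ hint)
  refine ⟨n, rfl, ?_⟩
  have hnorm : ‖ζ‖ = 1 := Complex.norm_eq_one_of_pow_eq_one hζ hm
  have : ‖(n : ℂ)‖ ≤ 2 := by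
    calc ‖(n : ℂ)‖ = ‖ζ + ζ⁻¹‖ := by rw [hq, Rat.cast_intCast]
      _ ≤ ‖ζ‖ + ‖ζ⁻¹‖ := norm_add_le _ _
      _ = 2 := by rw [norm_inv, hnorm]; norm_num
  rwa [Complex.norm_intCast, ← Int.cast_abs, ← Int.cast_ofNat, Int.cast_le] at this

lemma pow_twelve_eq_one_of_add_inv_eq_int {K : Type*} [Field K] {ζ : K} (hζ : ζ ≠ 0) {n : ℤ}
    (hn : |n| ≤ 1) (h : ζ + ζ⁻¹ = n) : ζ ^ 12 = 1 := by
  have hquad : ζ ^ 2 - n * ζ + 1 = 0 := by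
    field_simp at h
    linear_combination h
  obtain ⟨hl, hr⟩ := abs_le.mp hn
  interval_cases n
  · have h3 : ζ ^ 3 = 1 := by linear_combination (ζ - 1) * hquad
    rw [show 12 = 3 * 4 from rfl, pow_mul, h3, one_pow]
  · have h4 : ζ ^ 4 = 1 := by linear_combination (ζ ^ 2 - 1) * hquad
    rw [show 12 = 4 * 3 from rfl, pow_mul, h4, one_pow]
  · have h6 : ζ ^ 6 = 1 := by linear_combination (ζ + 1) * (ζ ^ 3 - 1) * hquad
    rw [show 12 = 6 * 2 from rfl, pow_mul, h6, one_pow]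

lemma add_eq_and_mul_eq_of_quadratic_roots {K : Type*} [Field K] {a b α β : K}
    (hα : α ^ 2 - a * α + b = 0) (hβ : β ^ 2 - a * β + b = 0) (hne : α ≠ β) :
    α + β = a ∧ α * β = b := by
  have hsum : α + β = a := by
    have : (α - β) * (α + β - a) = 0 := by linear_combination hα - hβ
    linear_combination (mul_eq_zero.mp this).resolve_left (sub_ne_zero.mpr hne)
  exact ⟨hsum, by linear_combination α * hsum - hα⟩

lemma div_add_inv_div_of_quadratic_roots {K : Type*} [Field K] {a b α β : K}
    (hα : α ^ 2 - a * α + b = 0) (hβ : β ^ 2 - a * β + b = 0) (hne : α ≠ β) (hb : b ≠ 0) :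
    α / β ≠ 0 ∧ α / β + (α / β)⁻¹ = a ^ 2 / b - 2 := by
  obtain ⟨hsum, hprod⟩ := add_eq_and_mul_eq_of_quadratic_roots hα hβ hne
  obtain ⟨hα0, hβ0⟩ := mul_ne_zero_iff.mp (hprod ▸ hb)
  refine ⟨div_ne_zero hα0 hβ0, ?_⟩
  rw [← hsum, ← hprod]
  field_simp
  ring

lemma Int.exists_eq_mul_of_sq_eq_prime_mul {p A B : ℤ} (hp : Prime p) (h : A ^ 2 = p * B) :
    ∃ r, A = p * r ∧ B = p * r ^ 2 := by
  obtain ⟨r, rfl⟩ := hp.dvd_of_dvd_pow (n := 2) ⟨B, h⟩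
  refine ⟨r, rfl, mul_left_cancel₀ hp.ne_zero ?_⟩
  linear_combination -h

lemma Int.exists_sq_eq_mul_iff {A B : ℤ} (hA : A ≠ 0) :
    (∃ k : ℤ, 1 ≤ k ∧ k ≤ 3 ∧ A ^ 2 = k * B) ↔
      ∃ r : ℤ, r ≠ 0 ∧
        ((A, B) = (r, r ^ 2) ∨ (A, B) = (2 * r, 2 * r ^ 2) ∨ (A, B) = (3 * r, 3 * r ^ 2)) := by
  constructor
  · rintro ⟨k, hk1, hk3, h⟩
    have hprime (p : ℤ) (hp : Prime p) (hpB : A ^ 2 = p * B) :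
        ∃ r : ℤ, r ≠ 0 ∧ (A, B) = (p * r, p * r ^ 2) := by
      obtain ⟨r, rfl, rfl⟩ := Int.exists_eq_mul_of_sq_eq_prime_mul hp hpB
      exact ⟨r, right_ne_zero_of_mul hA, rfl⟩
    interval_cases k
    · exact ⟨A, hA, .inl (by rw [one_mul] at h; rw [h])⟩
    · obtain ⟨r, hr, hAB⟩ := hprime 2 Int.prime_two h
      exact ⟨r, hr, .inr (.inl hAB)⟩
    · obtain ⟨r, hr, hAB⟩ := hprime 3 Int.prime_three h
      exact ⟨r, hr, .inr (.inr hAB)⟩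
  · rintro ⟨r, -, h | h | h⟩ <;> simp only [Prod.mk.injEq] at h <;> obtain ⟨rfl, rfl⟩ := h
    · exact ⟨1, le_rfl, by norm_num, by ring⟩
    · exact ⟨2, by norm_num, by norm_num, by ring⟩
    · exact ⟨3, by norm_num, le_rfl, by ring⟩

theorem degenerate_lucas_classification (A B : ℤ)
    (hABD : A * B * (A ^ 2 - 4 * B) ≠ 0)
    (α β : ℂ) (hα : α ^ 2 - A * α + B = 0) (hβ : β ^ 2 - A * β + B = 0)
    (hαβ : α ≠ β) :
    (∃ m : ℕ, 0 < m ∧ (α / β) ^ m = 1) ↔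
      ∃ r : ℤ, r ≠ 0 ∧
        ((A, B) = (r, r ^ 2) ∨ (A, B) = (2 * r, 2 * r ^ 2) ∨
          (A, B) = (3 * r, 3 * r ^ 2)) := by
  obtain ⟨hAB, hD⟩ := mul_ne_zero_iff.mp hABD
  obtain ⟨hA, hB⟩ := mul_ne_zero_iff.mp hAB
  obtain ⟨hζ0, htrace⟩ := div_add_inv_div_of_quadratic_roots hα hβ hαβ (Int.cast_ne_zero.mpr hB)
  replace htrace : α / β + (α / β)⁻¹ = ((A ^ 2 / B - 2 : ℚ) : ℂ) := by
    rw [htrace]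
    push_cast
    rfl
  have hratio (k : ℤ) : A ^ 2 = k * B ↔ (A ^ 2 / B - 2 : ℚ) = ((k - 2 : ℤ) : ℚ) := by
    have hBq : (B : ℚ) ≠ 0 := Int.cast_ne_zero.mpr hB
    rw [Int.cast_sub, Int.cast_ofNat, sub_left_inj, div_eq_iff hBq]
    exact_mod_cast Iff.rfl
  rw [← Int.exists_sq_eq_mul_iff hA]
  constructor
  · rintro ⟨m, hm, hζ⟩
    obtain ⟨n, hn, hn2⟩ := Complex.exists_int_eq_add_inv_of_pow_eq_one hm.ne' hζ htrace
    have hk : A ^ 2 = (n + 2) * B := (hratio _).mpr (by rw [add_sub_cancel_right, hn])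
    obtain ⟨hl, hr⟩ := abs_le.mp hn2
    refine ⟨n + 2, ?_, ?_, hk⟩
    · by_contra! h
      exact hA (pow_eq_zero_iff two_ne_zero |>.mp (by rw [hk, show n = -2 by omega]; ring))
    · by_contra! h
      exact hD (by rw [hk, show n = 2 by omega]; ring)
  · rintro ⟨k, hk1, hk3, hk⟩
    refine ⟨12, by norm_num, pow_twelve_eq_one_of_add_inv_eq_int hζ0 (n := k - 2)
      (abs_le.mpr ⟨by omega, by omega⟩) ?_⟩
    rw [htrace, (hratio k).mp hk, Rat.cast_intCast]
end

section
/- Let t be a real number with t ≥ 2. Then the number of pairs of integers (A, B) with A·B·(A²−4B) ≠ 0 such that the characteristic roots α, β of x² − Ax + B (ordered so |α| ≥ |β|) satisfy |α| ≤ t is at most 4t³ − t² + 7t. -/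
/-!
If every complex root of `z² - A z + B` has modulus at most `t`, then `B ≤ t²` (the product of the
roots), and `t² ∓ A t + B ≥ 0`, since otherwise the quadratic would have a real root beyond `±t`.
Hence `0 < |A| ≤ 2t` and `|A| t - t² ≤ B ≤ t²`, so each such `A` admits at most `2t² + 1 - |A| t`
values of `B`. Summing over `0 < |A| ≤ n = ⌊2t⌋` gives `2n (2t² + 1) - t n (n + 1)`, which is at
most `4t³ - t² + 7t`.
-/

open Finset

section QuadraticRoots

variable {a b t : ℝ}

theorem sq_sub_mul_add_nonneg_of_roots_norm_le
    (h : ∀ z : ℂ, z ^ 2 - a * z + b = 0 → ‖z‖ ≤ t) : 0 ≤ t ^ 2 - a * t + b := by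
  by_contra! hneg
  have hdisc : (2 * t - a) ^ 2 < a ^ 2 - 4 * b := by linarith
  set s := √(a ^ 2 - 4 * b)
  have hs : s ^ 2 = a ^ 2 - 4 * b := Real.sq_sqrt (by nlinarith)
  have hst : 2 * t - a < s := by nlinarith [Real.sqrt_nonneg (a ^ 2 - 4 * b)]
  have hroot : ((a + s) / 2) ^ 2 - a * ((a + s) / 2) + b = 0 := by linear_combination hs / 4
  have hle := h ((a + s) / 2 : ℝ) (by exact_mod_cast hroot)
  rw [Complex.norm_real, Real.norm_eq_abs] at hle
  linarith [le_abs_self ((a + s) / 2)]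

theorem le_sq_of_roots_norm_le
    (h : ∀ z : ℂ, z ^ 2 - a * z + b = 0 → ‖z‖ ≤ t) : b ≤ t ^ 2 := by
  obtain ⟨s, hs⟩ := IsAlgClosed.exists_eq_mul_self ((a : ℂ) ^ 2 - 4 * b)
  have hα := h ((a + s) / 2) (by linear_combination -hs / 4)
  have hβ := h ((a - s) / 2) (by linear_combination -hs / 4)
  have hprod : (a + s) / 2 * ((a - s) / 2) = (b : ℂ) := by linear_combination hs / 4
  calc b ≤ ‖(b : ℂ)‖ := by rw [Complex.norm_real, Real.norm_eq_abs]; exact le_abs_self b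
    _ = ‖(a + s) / 2‖ * ‖(a - s) / 2‖ := by rw [← hprod, norm_mul]
    _ ≤ t * t := mul_le_mul hα hβ (norm_nonneg _) ((norm_nonneg _).trans hα)
    _ = t ^ 2 := (sq t).symm

theorem abs_mul_sub_sq_le_of_roots_norm_le
    (h : ∀ z : ℂ, z ^ 2 - a * z + b = 0 → ‖z‖ ≤ t) : |a| * t - t ^ 2 ≤ b := by
  have hneg : ∀ z : ℂ, z ^ 2 - ((-a : ℝ) : ℂ) * z + b = 0 → ‖z‖ ≤ t := fun z hz => by
    simpa using h (-z) (by push_cast at hz; linear_combination hz)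
  rcases abs_cases a with ⟨habs, -⟩ | ⟨habs, -⟩ <;> rw [habs]
  · linarith [sq_sub_mul_add_nonneg_of_roots_norm_le h]
  · linarith [sq_sub_mul_add_nonneg_of_roots_norm_le hneg]

end QuadraticRoots

theorem card_Icc_ceil_floor_le {x y : ℝ} (h : x ≤ y + 1) :
    ((Icc ⌈x⌉ ⌊y⌋).card : ℝ) ≤ y - x + 1 := by
  have hcast : ((Icc ⌈x⌉ ⌊y⌋).card : ℝ) = max ((⌊y⌋ + 1 - ⌈x⌉ : ℤ) : ℝ) 0 := by
    rw [Int.card_Icc, ← Int.cast_natCast, Int.toNat_eq_max, Int.cast_max, Int.cast_zero]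
  rw [hcast, max_le_iff]
  push_cast
  exact ⟨by linarith [Int.floor_le y, Int.le_ceil x], by linarith⟩

theorem sum_abs_Icc_neg_self (n : ℕ) : ∑ A ∈ Icc (-n : ℤ) n, |A| = n * (n + 1) := by
  induction n with
  | zero => simp
  | succ n ih =>
    have hIcc : Icc (-(n + 1 : ℕ) : ℤ) (n + 1 : ℕ) =
        insert (-(n + 1 : ℤ)) (insert (n + 1 : ℤ) (Icc (-n : ℤ) n)) := by
      ext x; simp only [mem_Icc, mem_insert]; omega
    rw [hIcc, sum_insert (by simp only [mem_insert, mem_Icc]; omega),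
      sum_insert (by simp only [mem_Icc]; omega), ih, abs_neg, abs_of_nonneg (by positivity)]
    push_cast
    ring

def lucasPairsWithRootsBoundedBy (t : ℝ) : Set (ℤ × ℤ) :=
  {p | p.1 * p.2 * (p.1 ^ 2 - 4 * p.2) ≠ 0 ∧ ∀ z : ℂ, z ^ 2 - p.1 * z + p.2 = 0 → ‖z‖ ≤ t}

noncomputable def lucasBox (t : ℝ) : Finset (ℤ × ℤ) :=
  ((Icc (-⌊2 * t⌋₊ : ℤ) ⌊2 * t⌋₊).erase 0).biUnion fun A =>
    (Icc ⌈|(A : ℝ)| * t - t ^ 2⌉ ⌊t ^ 2⌋).image (Prod.mk A)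

theorem lucasPairsWithRootsBoundedBy_subset_lucasBox {t : ℝ} (ht : 0 < t) :
    lucasPairsWithRootsBoundedBy t ⊆ lucasBox t := by
  rintro ⟨A, B⟩ ⟨hne, hroots⟩
  have hA : A ≠ 0 := by rintro rfl; simp at hne
  replace hroots : ∀ z : ℂ, z ^ 2 - ((A : ℝ) : ℂ) * z + ((B : ℝ) : ℂ) = 0 → ‖z‖ ≤ t := by
    simpa only [Complex.ofReal_intCast] using hroots
  have hlow := abs_mul_sub_sq_le_of_roots_norm_le hroots
  have hup := le_sq_of_roots_norm_le hroots
  have hAn : A.natAbs ≤ ⌊2 * t⌋₊ := by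
    refine Nat.le_floor ?_
    rw [Nat.cast_natAbs, Int.cast_abs]
    nlinarith
  simp only [lucasBox, coe_biUnion, coe_image, Set.mem_iUnion, Set.mem_image, mem_coe, mem_erase,
    mem_Icc, Prod.mk.injEq, exists_prop]
  exact ⟨A, ⟨hA, by omega, by omega⟩, B, ⟨Int.ceil_le.2 hlow, Int.le_floor.2 hup⟩, rfl, rfl⟩

theorem card_lucasBox_le {t : ℝ} (ht : 0 ≤ t) :
    ((lucasBox t).card : ℝ) ≤ 2 * ⌊2 * t⌋₊ * (2 * t ^ 2 + 1) - t * (⌊2 * t⌋₊ * (⌊2 * t⌋₊ + 1)) := by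
  set n := ⌊2 * t⌋₊
  have hn : (n : ℝ) ≤ 2 * t := Nat.floor_le (by positivity)
  have hcard : ((lucasBox t).card : ℝ) ≤
      ∑ A ∈ (Icc (-n : ℤ) n).erase 0, (2 * t ^ 2 + 1 - |(A : ℝ)| * t) := by
    refine (Nat.cast_le.2 (card_biUnion_le.trans (sum_le_sum fun A _ => card_image_le))).trans ?_
    push_cast
    refine sum_le_sum fun A hA => ?_
    have hAn : |(A : ℝ)| ≤ n := by
      have := mem_Icc.1 (mem_of_mem_erase hA)
      exact abs_le.2 ⟨by exact_mod_cast this.1, by exact_mod_cast this.2⟩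
    refine (card_Icc_ceil_floor_le (by nlinarith)).trans_eq (by ring)
  have hsum : ∑ A ∈ Icc (-n : ℤ) n, |(A : ℝ)| = n * (n + 1) := by
    exact_mod_cast sum_abs_Icc_neg_self n
  have hcardE : ((Icc (-n : ℤ) n).erase 0).card = 2 * n := by
    rw [card_erase_of_mem (by simp), Int.card_Icc]
    omega
  rw [sum_sub_distrib, sum_const, ← sum_mul, sum_erase _ (by simp), hsum, hcardE, nsmul_eq_mul]
    at hcard
  exact hcard.trans_eq (by push_cast; ring)

theorem two_mul_mul_sub_mul_le_cubic {t x : ℝ} (ht : 0 ≤ t) (hx : x ≤ 2 * t) :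
    2 * x * (2 * t ^ 2 + 1) - t * (x * (x + 1)) ≤ 4 * t ^ 3 - t ^ 2 + 7 * t := by
  -- with `u = 2t - x ≥ 0` the difference is `t (u - 1/2)² + 2u + t² + 11t/4`
  nlinarith [mul_nonneg ht (sq_nonneg (2 * t - x - 1 / 2))]

theorem count_lucas_bounded_roots_upper (t : ℝ) (ht : 2 ≤ t) :
    {p : ℤ × ℤ | p.1 * p.2 * (p.1 ^ 2 - 4 * p.2) ≠ 0 ∧
      ∀ z : ℂ, z ^ 2 - p.1 * z + p.2 = 0 → ‖z‖ ≤ t}.Finite ∧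
    ({p : ℤ × ℤ | p.1 * p.2 * (p.1 ^ 2 - 4 * p.2) ≠ 0 ∧
      ∀ z : ℂ, z ^ 2 - p.1 * z + p.2 = 0 → ‖z‖ ≤ t}.ncard : ℝ) ≤
      4 * t ^ 3 - t ^ 2 + 7 * t := by
  change (lucasPairsWithRootsBoundedBy t).Finite ∧
    ((lucasPairsWithRootsBoundedBy t).ncard : ℝ) ≤ 4 * t ^ 3 - t ^ 2 + 7 * t
  have hsub := lucasPairsWithRootsBoundedBy_subset_lucasBox (by linarith : (0 : ℝ) < t)
  refine ⟨(lucasBox t).finite_toSet.subset hsub, ?_⟩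
  calc ((lucasPairsWithRootsBoundedBy t).ncard : ℝ)
      ≤ (lucasBox t).card := by
        exact_mod_cast (Set.ncard_le_ncard hsub (lucasBox t).finite_toSet).trans_eq
          (Set.ncard_coe_finset _)
    _ ≤ 2 * ⌊2 * t⌋₊ * (2 * t ^ 2 + 1) - t * (⌊2 * t⌋₊ * (⌊2 * t⌋₊ + 1)) :=
        card_lucasBox_le (by linarith)
    _ ≤ 4 * t ^ 3 - t ^ 2 + 7 * t :=
        two_mul_mul_sub_mul_le_cubic (by linarith) (Nat.floor_le (by linarith))
end

section
/- Let t be a real number with t ≥ 2. Then the number of pairs of integers (A, B) giving a non-degenerate Lucas sequence (i.e., A·B·(A²−4B) ≠ 0 and α/β is not a root of unity) whose dominant root satisfies |α| ≤ t is at least 4t³ − 10t² − 29t. -/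
/-!
For `a ≠ 0` and `|a| t - t² ≤ b ≤ t²`, both roots of `x² - a x + b` lie in the closed disc of
radius `t`. If moreover `α / β` is a root of unity, then `α / β + β / α = (a² - 2b) / b` is a
rational algebraic integer of absolute value at most `2`, so `a² = k b` with `0 ≤ k ≤ 4`.
Excluding these at most five values of `b` for each `0 < |a| ≤ ⌊2t⌋` still leaves about
`2t² - |a| t` admissible `b`, and summing over `a` gives `4t³ + O(t²)` pairs.
-/

theorem add_eq_and_mul_eq_of_sq_sub_mul_add_eq_zero {R : Type*} [CommRing R] [IsDomain R]
    {a b α β : R} (hne : α ≠ β) (hα : α ^ 2 - a * α + b = 0) (hβ : β ^ 2 - a * β + b = 0) :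
    α + β = a ∧ α * β = b := by
  have hsum : α + β = a := by
    have : (α - β) * (α + β - a) = 0 := by linear_combination hα - hβ
    simpa [sub_eq_zero, hne] using this
  exact ⟨hsum, by linear_combination -hα + α * hsum⟩

open Polynomial in
theorem isIntegral_add_inv_of_pow_eq_one {ζ : ℂ} {m : ℕ} (hm : m ≠ 0) (hζ : ζ ^ m = 1) :
    IsIntegral ℤ (ζ + ζ⁻¹) :=
  have hmonic := monic_X_pow_sub_C (1 : ℤ) hm
  (IsIntegral.add ⟨_, hmonic, by simp [hζ]⟩ ⟨_, hmonic, by simp [inv_pow, hζ]⟩)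

theorem exists_int_eq_of_add_inv_eq_ratCast {ζ : ℂ} {m : ℕ} (hm : m ≠ 0) (hζ : ζ ^ m = 1)
    {q : ℚ} (hq : ζ + ζ⁻¹ = q) : ∃ k : ℤ, q = k ∧ |k| ≤ 2 := by
  have hqint : IsIntegral ℤ q := by
    rw [← isIntegral_algebraMap_iff (algebraMap ℚ ℂ).injective, eq_ratCast, ← hq]
    exact isIntegral_add_inv_of_pow_eq_one hm hζ
  obtain ⟨k, rfl⟩ := IsIntegrallyClosed.isIntegral_iff.mp hqint
  refine ⟨k, by simp, ?_⟩
  have hnorm : ‖(k : ℂ)‖ ≤ 2 := by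
    have h1 := Complex.norm_eq_one_of_pow_eq_one hζ hm
    calc ‖(k : ℂ)‖ = ‖ζ + ζ⁻¹‖ := by simp [hq]
      _ ≤ ‖ζ‖ + ‖ζ⁻¹‖ := norm_add_le _ _
      _ = 2 := by rw [norm_inv, h1]; norm_num
  rw [Complex.norm_intCast] at hnorm
  exact_mod_cast hnorm

theorem exists_sq_eq_mul_of_div_pow_eq_one {a b : ℤ} {α β : ℂ} {m : ℕ} (hne : α ≠ β)
    (hα : α ^ 2 - a * α + b = 0) (hβ : β ^ 2 - a * β + b = 0) (hm : m ≠ 0)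
    (h : (α / β) ^ m = 1) : ∃ k : ℤ, 0 ≤ k ∧ k ≤ 4 ∧ a ^ 2 = k * b := by
  obtain ⟨hsum, hprod⟩ := add_eq_and_mul_eq_of_sq_sub_mul_add_eq_zero hne hα hβ
  have hb : (b : ℂ) ≠ 0 := by
    rintro hb
    rw [← hprod, mul_eq_zero] at hb
    rcases hb with rfl | rfl <;> simp [zero_pow hm] at h
  have hαβ : α / β + (α / β)⁻¹ = ((a ^ 2 - 2 * b : ℤ) / b : ℚ) := by
    have hα0 : α ≠ 0 := left_ne_zero_of_mul (hprod ▸ hb)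
    have hβ0 : β ≠ 0 := right_ne_zero_of_mul (hprod ▸ hb)
    rw [inv_div, div_add_div _ _ hβ0 hα0, mul_comm β α, hprod]
    push_cast
    congr 1
    linear_combination (α + β + a) * hsum - 2 * hprod
  obtain ⟨k, hk, hk2⟩ := exists_int_eq_of_add_inv_eq_ratCast hm h hαβ
  rw [div_eq_iff (by exact_mod_cast hb)] at hk
  have hk' : a ^ 2 - 2 * b = k * b := by exact_mod_cast hk
  exact ⟨k + 2, by linarith [neg_abs_le k], by linarith [le_abs_self k], by linear_combination hk'⟩

theorem Complex.norm_le_of_sq_sub_mul_add_eq_zero {a b t : ℝ} (ht : 0 < t) (hb : b ≤ t ^ 2)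
    (ha : |a| * t ≤ t ^ 2 + b) {z : ℂ} (hz : z ^ 2 - a * z + b = 0) : ‖z‖ ≤ t := by
  have hre : z.re ^ 2 - z.im ^ 2 - a * z.re + b = 0 := by
    simpa [sq] using congrArg Complex.re hz
  have him : z.im * (2 * z.re - a) = 0 := by
    linear_combination (by simpa [sq] using congrArg Complex.im hz : _ = _)
  rw [← sq_le_sq₀ (norm_nonneg z) ht.le, Complex.sq_norm, Complex.normSq_apply]
  rcases mul_eq_zero.mp him with hy | hx
  · rw [hy] at hre ⊢
    have hat : a * t ≤ t ^ 2 + b := (mul_le_mul_of_nonneg_right (le_abs_self a) ht.le).trans ha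
    have hnat : -a * t ≤ t ^ 2 + b := (mul_le_mul_of_nonneg_right (neg_le_abs a) ht.le).trans ha
    have ha2 : a ≤ 2 * t := le_of_mul_le_mul_right (by linarith) ht
    have hna2 : -a ≤ 2 * t := le_of_mul_le_mul_right (by linarith) ht
    have hx : -t ≤ z.re ∧ z.re ≤ t := by
      constructor <;> by_contra! hx
      · nlinarith [mul_pos (by linarith : 0 < -(z.re + t)) (by linarith : 0 < a + t - z.re)]
      · nlinarith [mul_pos (sub_pos.2 hx) (by linarith : 0 < z.re + t - a)]
    nlinarith
  · linear_combination hb - hre + z.re * hx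

theorem Complex.norm_le_of_forall_roots_norm_le {a b : ℂ} {t : ℝ}
    (h : ∀ z : ℂ, z ^ 2 - a * z + b = 0 → ‖z‖ ≤ t) : ‖a‖ ≤ 2 * t ∧ ‖b‖ ≤ t ^ 2 := by
  obtain ⟨s, hs⟩ := IsAlgClosed.exists_eq_mul_self (discrim 1 (-a) b)
  obtain ⟨x, hx⟩ := exists_quadratic_eq_zero one_ne_zero ⟨s, hs⟩
  obtain ⟨y, hy, hsum, hprod⟩ := vieta_formula_quadratic (b := a) (c := b) (x := x)
    (by linear_combination hx)
  have hxt := h x (by linear_combination hx)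
  have hyt := h y (by linear_combination hy)
  constructor
  · calc ‖a‖ = ‖x + y‖ := by rw [hsum]
      _ ≤ ‖x‖ + ‖y‖ := norm_add_le x y
      _ ≤ 2 * t := by linarith
  · calc ‖b‖ = ‖x‖ * ‖y‖ := by rw [← hprod, norm_mul]
      _ ≤ t * t := mul_le_mul hxt hyt (norm_nonneg y) ((norm_nonneg x).trans hxt)
      _ = t ^ 2 := (sq t).symm

theorem Int.finite_setOf_abs_le (r : ℝ) : {x : ℤ | |(x : ℝ)| ≤ r}.Finite :=
  (Set.finite_Icc (-⌈r⌉) ⌈r⌉).subset fun x hx => by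
    rw [Set.mem_ofPred_eq, abs_le] at hx
    constructor
    · rw [neg_le, Int.le_ceil_iff]; push_cast; linarith
    · rw [Int.le_ceil_iff]; linarith

theorem Int.sum_abs_Icc_neg (n : ℕ) : ∑ a ∈ Finset.Icc (-(n : ℤ)) n, |a| = n * (n + 1) := by
  induction n with
  | zero => simp
  | succ n ih =>
    have hIcc : Finset.Icc (-((n + 1 : ℕ) : ℤ)) (n + 1 : ℕ) =
        insert (-((n : ℤ) + 1)) (insert ((n : ℤ) + 1) (Finset.Icc (-(n : ℤ)) n)) := by
      ext x; simp only [Finset.mem_Icc, Finset.mem_insert]; omega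
    rw [hIcc, Finset.sum_insert (by simp; omega), Finset.sum_insert (by simp), ih]
    push_cast
    rw [abs_neg, abs_of_nonneg (by positivity)]
    ring

def nondegLucasPairs (t : ℝ) : Set (ℤ × ℤ) :=
  {p : ℤ × ℤ | p.1 * p.2 * (p.1 ^ 2 - 4 * p.2) ≠ 0 ∧
    (¬∃ (α β : ℂ) (m : ℕ), α ≠ β ∧ α ^ 2 - p.1 * α + p.2 = 0 ∧
      β ^ 2 - p.1 * β + p.2 = 0 ∧ 0 < m ∧ (α / β) ^ m = 1) ∧
    ∀ z : ℂ, z ^ 2 - p.1 * z + p.2 = 0 → ‖z‖ ≤ t}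

theorem finite_nondegLucasPairs (t : ℝ) : (nondegLucasPairs t).Finite :=
  ((Int.finite_setOf_abs_le (2 * t)).prod (Int.finite_setOf_abs_le (t ^ 2))).subset
    fun p hp => by
      simpa only [Set.mem_prod, Set.mem_ofPred_eq, Complex.norm_intCast] using
        Complex.norm_le_of_forall_roots_norm_le hp.2.2

/-- If `a ^ 2 = k * b` with `k ≠ 0` then `b = a ^ 2 / k`: removing these quotients removes every
`b` for which `(a, b)` is degenerate. -/
noncomputable def lucasFiber (t : ℝ) (a : ℤ) : Finset ℤ :=
  Finset.Icc ⌈|(a : ℝ)| * t - t ^ 2⌉ ⌊t ^ 2⌋ \ {0, a ^ 2, a ^ 2 / 2, a ^ 2 / 3, a ^ 2 / 4}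

theorem le_card_lucasFiber (t : ℝ) (a : ℤ) :
    2 * t ^ 2 - |(a : ℝ)| * t - 6 ≤ (lucasFiber t a).card := by
  set I := Finset.Icc ⌈|(a : ℝ)| * t - t ^ 2⌉ ⌊t ^ 2⌋
  have hI : I.card ≤ (lucasFiber t a).card + 5 :=
    Finset.card_le_card_sdiff_add_card.trans (Nat.add_le_add_left Finset.card_le_five _)
  have hIcc : ((⌊t ^ 2⌋ + 1 - ⌈|(a : ℝ)| * t - t ^ 2⌉ : ℤ) : ℝ) ≤ I.card := by
    rw [Int.card_Icc]; exact_mod_cast Int.self_le_toNat _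
  have hfloor := Int.sub_one_lt_floor (t ^ 2)
  have hceil := Int.ceil_lt_add_one (|(a : ℝ)| * t - t ^ 2)
  push_cast at hIcc
  have : (I.card : ℝ) ≤ (lucasFiber t a).card + 5 := by exact_mod_cast hI
  linarith

theorem mk_mem_nondegLucasPairs {t : ℝ} (ht : 0 < t) {a b : ℤ} (ha : a ≠ 0)
    (hb : b ∈ lucasFiber t a) : (a, b) ∈ nondegLucasPairs t := by
  simp only [lucasFiber, Finset.mem_sdiff, Finset.mem_Icc, Int.ceil_le, Int.le_floor,
    Finset.mem_insert, Finset.mem_singleton, not_or] at hb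
  obtain ⟨⟨hlo, hhi⟩, hb0, h1, h2, h3, h4⟩ := hb
  refine ⟨mul_ne_zero (mul_ne_zero ha hb0) (by change a ^ 2 - 4 * b ≠ 0; omega), ?_,
    fun z hz => ?_⟩
  · rintro ⟨α, β, m, hne, hα, hβ, hm, h⟩
    obtain ⟨k, hk0, hk4, hk⟩ :=
      exists_sq_eq_mul_of_div_pow_eq_one (a := a) (b := b) hne hα hβ hm.ne' h
    interval_cases k
    · exact ha (pow_eq_zero_iff two_ne_zero |>.mp (by simpa using hk))
    all_goals omega
  · exact Complex.norm_le_of_sq_sub_mul_add_eq_zero ht hhi (by linarith) (by simpa using hz)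

theorem le_ncard_nondegLucasPairs {t : ℝ} (ht : 0 < t) (n : ℕ) :
    4 * n * t ^ 2 - n * (n + 1) * t - 12 * n ≤ (nondegLucasPairs t).ncard := by
  set s := (Finset.Icc (-(n : ℤ)) n).erase 0
  have hsum : ∑ a ∈ s, (2 * t ^ 2 - |(a : ℝ)| * t - 6) =
      4 * n * t ^ 2 - n * (n + 1) * t - 12 * n := by
    have habs := congrArg (Int.cast : ℤ → ℝ) (Int.sum_abs_Icc_neg n)
    push_cast at habs
    rw [Finset.sum_erase_eq_sub (by simp), Finset.sum_sub_distrib, Finset.sum_sub_distrib,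
      Finset.sum_const, Finset.sum_const, ← Finset.sum_mul, habs, Int.card_Icc,
      show (n + 1 - -(n : ℤ)).toNat = 2 * n + 1 by omega]
    push_cast
    ring
  have hinj : (s.sigma (lucasFiber t)).card ≤ (nondegLucasPairs t).ncard := by
    rw [← Set.ncard_coe_finset]
    refine Set.ncard_le_ncard_of_injOn (fun x => (x.1, x.2)) (fun x hx => ?_) ?_
      (finite_nondegLucasPairs t)
    · rw [Finset.mem_coe, Finset.mem_sigma, Finset.mem_erase] at hx
      exact mk_mem_nondegLucasPairs ht hx.1.1 hx.2
    · rintro ⟨a, b⟩ - ⟨a', b'⟩ - h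
      simp_all
  calc 4 * n * t ^ 2 - n * (n + 1) * t - 12 * n = ∑ a ∈ s, (2 * t ^ 2 - |(a : ℝ)| * t - 6) :=
        hsum.symm
    _ ≤ ∑ a ∈ s, ((lucasFiber t a).card : ℝ) :=
        Finset.sum_le_sum fun a _ => le_card_lucasFiber t a
    _ = (s.sigma (lucasFiber t)).card := by rw [Finset.card_sigma]; push_cast; rfl
    _ ≤ (nondegLucasPairs t).ncard := by exact_mod_cast hinj

theorem count_lucas_bounded_roots_lower (t : ℝ) (ht : 2 ≤ t) :
    4 * t ^ 3 - 10 * t ^ 2 - 29 * t ≤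
      (({p : ℤ × ℤ | p.1 * p.2 * (p.1 ^ 2 - 4 * p.2) ≠ 0 ∧
        (¬∃ (α β : ℂ) (m : ℕ), α ≠ β ∧ α ^ 2 - p.1 * α + p.2 = 0 ∧
          β ^ 2 - p.1 * β + p.2 = 0 ∧ 0 < m ∧ (α / β) ^ m = 1) ∧
        ∀ z : ℂ, z ^ 2 - p.1 * z + p.2 = 0 → ‖z‖ ≤ t}.ncard : ℝ)) := by
  set n := ⌊2 * t⌋₊
  have hn_le : (n : ℝ) ≤ 2 * t := Nat.floor_le (by linarith)
  have hn_gt : 2 * t < n + 1 := Nat.lt_floor_add_one _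
  calc 4 * t ^ 3 - 10 * t ^ 2 - 29 * t ≤ 4 * n * t ^ 2 - n * (n + 1) * t - 12 * n := by
        nlinarith [mul_nonneg (by linarith : (0 : ℝ) ≤ t) (mul_nonneg (sub_nonneg.2 hn_le)
          (by linarith : (0 : ℝ) ≤ n + 1 - 2 * t))]
    _ ≤ _ := le_ncard_nondegLucasPairs (by linarith) n
end

section
/- For every even integer n ≥ 6, one has ∏_{k=1}^{(n−2)/2} cos(kπ/n) ≥ 2^{(n−2)/2} · ((n−2)/2)! / n^{(n−2)/2} > 2^{−n+2}. -/
/-!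
Write `n = 2m + 2`. Jordan's inequality `cos x ≥ 1 - 2x/π` on `[0, π/2]` gives
`cos (kπ/n) ≥ 1 - k/(m+1) = (m+1-k)/(m+1)`, and these factors multiply to `m!/(m+1)^m`.
For the strict bound `m!/(m+1)^m > 4^{-m}`, the ratio of consecutive terms of
`(m+1)^m / m!` is `(1 + 1/(m+1))^(m+1) ≤ e < 4`.
-/

open Real Finset Nat

theorem prod_Icc_add_one_sub_eq_factorial (m : ℕ) : ∏ k ∈ Icc 1 m, (m + 1 - k) = m ! := by
  rw [← prod_Ico_id_eq_factorial, ← Finset.Ico_add_one_right_eq_Icc,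
    prod_Ico_reflect (fun k => k) 1 (Nat.le_succ (m + 1))]
  simp

theorem one_sub_div_le_cos_mul_pi_div {x y : ℝ} (hx : 0 ≤ x) (hxy : 2 * x ≤ y) (hy : 0 < y) :
    1 - 2 * x / y ≤ cos (x * π / y) := by
  have hle : x * π / y ≤ π / 2 := by
    rw [div_le_div_iff₀ hy two_pos]
    nlinarith [pi_pos]
  calc 1 - 2 * x / y = 1 - 2 / π * (x * π / y) := by field_simp
    _ ≤ cos (x * π / y) := one_sub_mul_le_cos (by positivity) hle

theorem factorial_div_pow_le_prod_cos (m : ℕ) :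
    (m ! : ℝ) / ((m : ℝ) + 1) ^ m ≤ ∏ k ∈ Icc 1 m, cos (k * π / (2 * (m + 1))) := by
  have hfactor : ∀ k ∈ Icc 1 m,
      (((m + 1 - k : ℕ) : ℝ) / (m + 1)) = 1 - 2 * k / (2 * (m + 1)) := by
    intro k hk
    rw [mem_Icc] at hk
    rw [Nat.cast_sub (by omega)]
    field_simp
    push_cast
    ring
  calc (m ! : ℝ) / ((m : ℝ) + 1) ^ m
      = ∏ k ∈ Icc 1 m, (((m + 1 - k : ℕ) : ℝ) / (m + 1)) := by
        rw [prod_div_distrib, ← Nat.cast_prod, prod_Icc_add_one_sub_eq_factorial, prod_const,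
          Nat.card_Icc, Nat.add_sub_cancel]
    _ = ∏ k ∈ Icc 1 m, (1 - 2 * (k : ℝ) / (2 * (m + 1))) := prod_congr rfl hfactor
    _ ≤ ∏ k ∈ Icc 1 m, cos (k * π / (2 * (m + 1))) := by
        refine prod_le_prod (fun k hk => ?_) (fun k hk => ?_)
        · rw [← hfactor k hk]
          positivity
        · have hkm : (k : ℝ) ≤ m := by exact_mod_cast (mem_Icc.mp hk).2
          exact one_sub_div_le_cos_mul_pi_div k.cast_nonneg (by linarith) (by positivity)

theorem add_pow_le_exp_mul_pow {x y : ℝ} (hx : 0 < x) (hxy : 0 ≤ x + y) (k : ℕ) :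
    (x + y) ^ k ≤ exp (k * (y / x)) * x ^ k := by
  have hbase : x + y ≤ x * exp (y / x) := by
    calc x + y = x * (y / x + 1) := by field_simp; ring
      _ ≤ x * exp (y / x) := mul_le_mul_of_nonneg_left (add_one_le_exp _) hx.le
  calc (x + y) ^ k ≤ (x * exp (y / x)) ^ k := pow_le_pow_left₀ hxy hbase k
    _ = exp (k * (y / x)) * x ^ k := by rw [mul_pow, ← exp_nat_mul, mul_comm]

theorem add_one_pow_lt_four_pow_mul_factorial {m : ℕ} (hm : 1 ≤ m) :
    ((m : ℝ) + 1) ^ m < 4 ^ m * m ! := by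
  induction m, hm using Nat.le_induction with
  | base => norm_num
  | succ m hm ih =>
    have hm1 : (0 : ℝ) < m + 1 := by positivity
    have hratio : ((m : ℝ) + 1 + 1) ^ (m + 1) < 4 * ((m : ℝ) + 1) ^ (m + 1) := by
      calc ((m : ℝ) + 1 + 1) ^ (m + 1)
          ≤ exp ((m + 1 : ℕ) * (1 / ((m : ℝ) + 1))) * ((m : ℝ) + 1) ^ (m + 1) :=
            add_pow_le_exp_mul_pow hm1 (by positivity) _
        _ = exp 1 * ((m : ℝ) + 1) ^ (m + 1) := by push_cast; field_simp
        _ < 4 * ((m : ℝ) + 1) ^ (m + 1) := by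
            gcongr
            linarith [exp_one_lt_d9]
    calc (((m + 1 : ℕ) : ℝ) + 1) ^ (m + 1) < 4 * ((m : ℝ) + 1) ^ (m + 1) := by
          push_cast; exact hratio
      _ = 4 * ((m : ℝ) + 1) * ((m : ℝ) + 1) ^ m := by ring
      _ < 4 * ((m : ℝ) + 1) * (4 ^ m * m !) := by gcongr
      _ = 4 ^ (m + 1) * (m + 1) ! := by push_cast [factorial_succ]; ring

theorem cos_prod_lower_even (n : ℕ) (heven : Even n) (hn : 6 ≤ n) :
    (2 : ℝ) ^ ((n - 2) / 2) * (Nat.factorial ((n - 2) / 2) : ℝ) / (n : ℝ) ^ ((n - 2) / 2) ≤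
      ∏ k ∈ Finset.Icc 1 ((n - 2) / 2), Real.cos (k * Real.pi / n) ∧
    (2 : ℝ) ^ (-(n : ℤ) + 2) <
      (2 : ℝ) ^ ((n - 2) / 2) * (Nat.factorial ((n - 2) / 2) : ℝ) / (n : ℝ) ^ ((n - 2) / 2) := by
  obtain ⟨m, rfl⟩ : ∃ m, n = 2 * m + 2 := by
    obtain ⟨j, hj⟩ := heven
    exact ⟨(n - 2) / 2, by omega⟩
  have hm : (2 * m + 2 - 2) / 2 = m := by omega
  have hn_cast : ((2 * m + 2 : ℕ) : ℝ) = 2 * (m + 1) := by push_cast; ring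
  have hlower : (2 : ℝ) ^ m * m ! / (2 * (m + 1)) ^ m = m ! / ((m : ℝ) + 1) ^ m := by
    rw [mul_pow, mul_div_mul_left _ _ (by positivity)]
  have hpow : (2 : ℝ) ^ (-((2 * m + 2 : ℕ) : ℤ) + 2) = (4 ^ m)⁻¹ := by
    rw [show -((2 * m + 2 : ℕ) : ℤ) + 2 = -((2 * m : ℕ) : ℤ) by push_cast; ring,
      zpow_neg, zpow_natCast, pow_mul]
    norm_num
  rw [hm, hn_cast, hlower, hpow]
  refine ⟨factorial_div_pow_le_prod_cos m, ?_⟩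
  rw [lt_div_iff₀ (by positivity), inv_mul_lt_iff₀ (by positivity)]
  exact add_one_pow_lt_four_pow_mul_factorial (by omega)
end
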